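/- Any polynomial p over a commutative ring that satisfies the two defining determinant identities — p(XY) = p(X)·p(Y) for all n×n matrices X, Y, and p(C) = c₁₁·...·c_{nn} for all triangular matrices C — agrees with the determinant on all n×n matrices; in particular, this follows because every invertible square matrix over a field can be written as a product of upper and lower triangular matrices (and elementary row-swap factors expressible as such products). -/
import Mathlib

open Matrix

theorem stmt16 {K : Type*} [Field K] {n : ℕ} (p : Matrix (Fin n) (Fin n) K → K)
    (hmul : ∀ X Y : Matrix (Fin n) (Fin n) K, p (X * Y) = p X * p Y)
    (htri : ∀ C : Matrix (Fin n) (Fin n) K,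
      ((∀ i j, i < j → C i j = 0) ∨ (∀ i j, j < i → C i j = 0)) → p C = ∏ i, C i i) :
    ∀ A : Matrix (Fin n) (Fin n) K, p A = A.det := by
  have hp1 : p 1 = 1 := by
    rw [htri 1 (Or.inl fun i j h => Matrix.one_apply_ne h.ne)]
    simp
  have htv : ∀ t : Matrix.TransvectionStruct (Fin n) K, p t.toMatrix = 1 := by
    intro t
    have hd : ∀ a, t.toMatrix a a = 1 := by
      intro a
      simp [Matrix.TransvectionStruct.toMatrix, Matrix.transvection,
        Matrix.single, Matrix.one_apply]
      intro h h'
      exact absurd (h ▸ h'.symm : t.i = t.j) t.hij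
    have hoff : ∀ a b : Fin n, a ≠ b → (a, b) ≠ (t.i, t.j) → t.toMatrix a b = 0 := by
      intro a b hab h
      simp [Matrix.TransvectionStruct.toMatrix, Matrix.transvection,
        Matrix.single, Matrix.one_apply, hab]
      intro h1 h2
      exact absurd (by rw [h1, h2]) h
    rcases lt_or_gt_of_ne t.hij with hij | hij
    · rw [htri _ (Or.inr fun a b h => hoff a b h.ne' (by
        rintro ⟨⟩; exact absurd hij (not_lt.2 h.le)))]
      simp [hd]
    · rw [htri _ (Or.inl fun a b h => hoff a b h.ne (by
        rintro ⟨⟩; exact absurd hij (not_lt.2 h.le)))]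
      simp [hd]
  have hlist : ∀ L : List (Matrix.TransvectionStruct (Fin n) K),
      p (L.map Matrix.TransvectionStruct.toMatrix).prod = 1 := by
    intro L
    induction L with
    | nil => simpa using hp1
    | cons t L ih => rw [List.map_cons, List.prod_cons, hmul, htv, ih, one_mul]
  intro A
  obtain ⟨L, L', D, h⟩ := Matrix.Pivot.exists_list_transvec_mul_mul_list_transvec_eq_diagonal A
  have h1 : p A = ∏ i, D i := by
    have := congrArg p h
    rw [hmul, hmul, hlist, hlist, one_mul, mul_one,
      htri (Matrix.diagonal D) (Or.inl fun i j hij => Matrix.diagonal_apply_ne _ hij.ne)] at this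
    simpa using this
  have h2 : A.det = ∏ i, D i := by
    have := congrArg Matrix.det h
    simpa using this
  rw [h1, h2]
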